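/- arXiv:math/0406027 — 2 statements merged into one kernel-verified Lean document; each statement's English description precedes it below -/
import Mathlib

section
/- Let u : B → ℝ be a positive C² function on an open set B ⊆ ℝⁿ with −Δu > 0 (i.e., u is strictly superharmonic), and let η be a smooth nonnegative compactly supported function on B. Then ∫ |∇(log u)|² η² ≤ 4 ∫ |∇η|², where the integrals are over B with respect to Lebesgue measure. -/
open MeasureTheory

lemma aux_deriv {n : ℕ} {u η : EuclideanSpace ℝ (Fin n) → ℝ}
    {x v : EuclideanSpace ℝ (Fin n)} (hux : u x ≠ 0)
    (hu : HasFDerivAt u (fderiv ℝ u x) x)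
    (hw : HasFDerivAt (fun y => fderiv ℝ u y v) (fderiv ℝ (fun y => fderiv ℝ u y v) x) x)
    (hη : HasFDerivAt η (fderiv ℝ η x) x) :
    DifferentiableAt ℝ (fun y => η y ^ 2 * ((u y)⁻¹ * fderiv ℝ u y v)) x ∧
    fderiv ℝ (fun y => η y ^ 2 * ((u y)⁻¹ * fderiv ℝ u y v)) x v =
      2 * η x * fderiv ℝ η x v * ((u x)⁻¹ * fderiv ℝ u x v)
        - η x ^ 2 * ((u x)⁻¹ ^ 2 * fderiv ℝ u x v ^ 2)
        + η x ^ 2 * ((u x)⁻¹ * fderiv ℝ (fun y => fderiv ℝ u y v) x v) := by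
  have h1 : HasFDerivAt (fun y => η y ^ 2) (η x • fderiv ℝ η x + η x • fderiv ℝ η x) x := by
    have h0 := hη.mul hη
    rw [show (fun y => η y ^ 2) = η * η from funext fun y => by simp [sq]]
    exact h0
  have h2 : HasFDerivAt (fun y => (u y)⁻¹) (-(u x ^ 2)⁻¹ • fderiv ℝ u x) x := by
    have := (hasDerivAt_inv hux).comp_hasFDerivAt x hu
    exact this
  have h23 := h2.mul hw
  have h4 := h1.mul h23
  refine ⟨h4.differentiableAt, ?_⟩
  rw [show (fun y => η y ^ 2 * ((u y)⁻¹ * fderiv ℝ u y v)) =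
    (fun y => η y ^ 2) * ((fun y => (u y)⁻¹) * fun y => fderiv ℝ u y v) from rfl, h4.fderiv]
  simp only [Pi.mul_apply, ContinuousLinearMap.add_apply, ContinuousLinearMap.smul_apply, smul_eq_mul,
    ContinuousLinearMap.coe_smul', Pi.smul_apply, ContinuousLinearMap.neg_apply]
  have hsq : (u x ^ 2)⁻¹ = (u x)⁻¹ ^ 2 := by rw [sq, sq, mul_inv]
  rw [hsq]
  ring

lemma eval_eq {n : ℕ} (L : EuclideanSpace ℝ (Fin n) →L[ℝ] ℝ) (i : Fin n) :
    L (EuclideanSpace.single i 1)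
      = (InnerProductSpace.toDual ℝ (EuclideanSpace ℝ (Fin n))).symm L i := by
  have h := InnerProductSpace.toDual_symm_apply (𝕜 := ℝ)
    (E := EuclideanSpace ℝ (Fin n)) (x := EuclideanSpace.single i 1) (y := L)
  rw [← h, EuclideanSpace.inner_single_right]
  simp

lemma norm_clm_sq {n : ℕ} (L : EuclideanSpace ℝ (Fin n) →L[ℝ] ℝ) :
    ‖L‖ ^ 2 = ∑ i, L (EuclideanSpace.single i 1) ^ 2 := by
  set v := (InnerProductSpace.toDual ℝ (EuclideanSpace ℝ (Fin n))).symm L with hv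
  have h1 : ‖L‖ = ‖v‖ := by
    rw [hv]; exact ((InnerProductSpace.toDual ℝ _).symm.norm_map L).symm
  rw [h1, EuclideanSpace.norm_eq, Real.sq_sqrt (Finset.sum_nonneg fun i _ => sq_nonneg _)]
  exact Finset.sum_congr rfl fun i _ => by rw [eval_eq L i, Real.norm_eq_abs, sq_abs]

lemma cs_clm {n : ℕ} (L M : EuclideanSpace ℝ (Fin n) →L[ℝ] ℝ) :
    (∑ i, L (EuclideanSpace.single i 1) * M (EuclideanSpace.single i 1)) ≤ ‖L‖ * ‖M‖ := by
  set vL := (InnerProductSpace.toDual ℝ (EuclideanSpace ℝ (Fin n))).symm L with hvL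
  set vM := (InnerProductSpace.toDual ℝ (EuclideanSpace ℝ (Fin n))).symm M with hvM
  have key : (∑ i, L (EuclideanSpace.single i 1) * M (EuclideanSpace.single i 1))
      = (inner ℝ vL vM : ℝ) := by
    rw [PiLp.inner_apply]
    exact Finset.sum_congr rfl fun i _ => by
      rw [eval_eq L i, eval_eq M i]; simp [mul_comm, hvL, hvM]
  rw [key]
  calc (inner ℝ vL vM : ℝ) ≤ ‖vL‖ * ‖vM‖ := real_inner_le_norm _ _
    _ = ‖L‖ * ‖M‖ := by
        rw [hvL, hvM, LinearIsometryEquiv.norm_map, LinearIsometryEquiv.norm_map]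

/-- Caccioppoli/BMO estimate for the logarithm of a positive strictly
superharmonic function: ∫ |∇ log u|² η² ≤ 4 ∫ |∇η|². -/
theorem log_superharmonic_estimate {n : ℕ} (B : Set (EuclideanSpace ℝ (Fin n)))
    (hB : IsOpen B) (u : EuclideanSpace ℝ (Fin n) → ℝ)
    (hu : ContDiffOn ℝ 2 u B) (hupos : ∀ x ∈ B, 0 < u x)
    (hsuper : ∀ x ∈ B,
      (∑ i, fderiv ℝ (fun y => fderiv ℝ u y (EuclideanSpace.single i 1)) x
        (EuclideanSpace.single i 1)) < 0)
    (η : EuclideanSpace ℝ (Fin n) → ℝ) (hη : ContDiff ℝ (⊤ : ℕ∞) η)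
    (hηc : HasCompactSupport η) (hηsupp : tsupport η ⊆ B) (hηpos : ∀ x, 0 ≤ η x) :
    ∫ x in B, ‖fderiv ℝ (fun y => Real.log (u y)) x‖ ^ 2 * (η x) ^ 2 ≤
      4 * ∫ x in B, ‖fderiv ℝ η x‖ ^ 2 := by
  classical
  set e : Fin n → EuclideanSpace ℝ (Fin n) := fun i => EuclideanSpace.single i 1 with hedef
  -- the vector field components
  set f : Fin n → EuclideanSpace ℝ (Fin n) → ℝ :=
    fun i x => η x ^ 2 * ((u x)⁻¹ * fderiv ℝ u x (e i)) with hfdef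
  -- auxiliary global functions
  set C : EuclideanSpace ℝ (Fin n) → ℝ := fun x =>
    2 * η x * (u x)⁻¹ * ∑ i, fderiv ℝ η x (e i) * fderiv ℝ u x (e i) with hCdef
  set X : EuclideanSpace ℝ (Fin n) → ℝ := fun x =>
    η x ^ 2 * ((u x)⁻¹ ^ 2 * ∑ i, fderiv ℝ u x (e i) ^ 2) with hXdef
  set T : EuclideanSpace ℝ (Fin n) → ℝ := fun x =>
    η x ^ 2 * ((u x)⁻¹ * ∑ i, fderiv ℝ (fun y => fderiv ℝ u y (e i)) x (e i)) with hTdef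
  set Y : EuclideanSpace ℝ (Fin n) → ℝ := fun x => ‖fderiv ℝ η x‖ ^ 2 with hYdef
  -- vanishing off tsupport η
  have hηt0 : ∀ x ∉ tsupport η, η x = 0 := fun x hx => image_eq_zero_of_notMem_tsupport hx
  have hηB0 : ∀ x ∉ B, η x = 0 := fun x hx => hηt0 x fun h => hx (hηsupp h)
  have hdη0 : ∀ x ∉ tsupport η, fderiv ℝ η x = 0 := by
    intro x hx
    by_contra h
    exact hx (support_fderiv_subset ℝ (by simpa using h))
  have hdηB0 : ∀ x ∉ B, fderiv ℝ η x = 0 := fun x hx => hdη0 x fun h => hx (hηsupp h)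
  -- local facts on B
  have hux : ∀ x ∈ B, HasFDerivAt u (fderiv ℝ u x) x := by
    intro x hx
    exact (((hu.contDiffAt (hB.mem_nhds hx)).differentiableAt (by norm_num)).hasFDerivAt)
  have hgC1 : ∀ i, ContDiffOn ℝ 1 (fun y => fderiv ℝ u y (e i)) B :=
    fun i => (hu.fderiv_of_isOpen hB (by norm_num)).clm_apply contDiffOn_const
  have hwx : ∀ i, ∀ x ∈ B,
      HasFDerivAt (fun y => fderiv ℝ u y (e i))
        (fderiv ℝ (fun y => fderiv ℝ u y (e i)) x) x := by
    intro i x hx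
    exact (((hgC1 i).differentiableOn (by norm_num)).differentiableAt (hB.mem_nhds hx)).hasFDerivAt
  have hηx : ∀ x : EuclideanSpace ℝ (Fin n), HasFDerivAt η (fderiv ℝ η x) x :=
    fun x => ((hη.differentiable (by simp)) x).hasFDerivAt
  -- continuity glue / integrability
  have glue : ∀ g : EuclideanSpace ℝ (Fin n) → ℝ, ContinuousOn g B → (∀ x ∉ tsupport η, g x = 0) →
      Integrable g := by
    intro g hgB hg0
    have hcont : Continuous g := by
      rw [continuous_iff_continuousAt]
      intro x
      by_cases hx : x ∈ B
      · exact hgB.continuousAt (hB.mem_nhds hx)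
      · have hx' : x ∉ tsupport η := fun h => hx (hηsupp h)
        have hev : g =ᶠ[nhds x] fun _ => 0 := by
          filter_upwards [(isClosed_tsupport η).isOpen_compl.mem_nhds hx'] with y hy
            using hg0 y hy
        exact (continuousAt_congr hev).mpr continuousAt_const
    exact hcont.integrable_of_hasCompactSupport (HasCompactSupport.intro hηc hg0)
  -- continuity ingredients on B
  have hcu : ContinuousOn u B := hu.continuousOn
  have hcuinv : ContinuousOn (fun x => (u x)⁻¹) B :=
    hcu.inv₀ fun x hx => (hupos x hx).ne'
  have hcη : Continuous η := hη.continuous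
  have hcdη : Continuous (fderiv ℝ η) := hη.continuous_fderiv (by simp)
  have hcdu : ∀ i, ContinuousOn (fun x => fderiv ℝ u x (e i)) B :=
    fun i => (hgC1 i).continuousOn
  have hcw : ∀ i, ContinuousOn
      (fun x => fderiv ℝ (fun y => fderiv ℝ u y (e i)) x (e i)) B := by
    intro i
    exact ((hgC1 i).continuousOn_fderiv_of_isOpen hB le_rfl).clm_apply continuousOn_const
  -- integrability of the main players
  have iC : Integrable C := by
    apply glue _ ?_ ?_
    · exact ((continuous_const.mul hcη).continuousOn.mul hcuinv).mul
        (continuousOn_finset_sum _ fun i _ =>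
          (hcdη.continuousOn.clm_apply continuousOn_const).mul (hcdu i))
    · intro x hx; simp [hCdef, hηt0 x hx]
  have iX : Integrable X := by
    apply glue _ ?_ ?_
    · exact ((hcη.pow 2).continuousOn).mul ((hcuinv.pow 2).mul
        (continuousOn_finset_sum _ fun i _ => (hcdu i).pow 2))
    · intro x hx; simp [hXdef, hηt0 x hx]
  have iT : Integrable T := by
    apply glue _ ?_ ?_
    · exact ((hcη.pow 2).continuousOn).mul (hcuinv.mul
        (continuousOn_finset_sum _ fun i _ => hcw i))
    · intro x hx; simp [hTdef, hηt0 x hx]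
  have iY : Integrable Y := by
    apply glue _ ?_ ?_
    · exact ((hcdη.norm.pow 2)).continuousOn
    · intro x hx; simp [hYdef, hdη0 x hx]
  -- f i is C¹ on B
  have hfC1 : ∀ i, ContDiffOn ℝ 1 (f i) B := by
    intro i
    exact ((hη.of_le (by simp)).pow 2).contDiffOn.mul
      (((hu.of_le one_le_two).inv fun x hx => (hupos x hx).ne').mul (hgC1 i))
  -- support of f i
  have hfsupp : ∀ i, ∀ x ∉ tsupport η, f i x = 0 := by
    intro i x hx; simp [hfdef, hηt0 x hx]
  have hftsupp : ∀ i, tsupport (f i) ⊆ tsupport η := by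
    intro i
    apply closure_minimal _ (isClosed_tsupport η)
    intro x hx
    by_contra h
    exact hx (hfsupp i x h)
  have hdf0 : ∀ i, ∀ x ∉ tsupport η, fderiv ℝ (f i) x = 0 := by
    intro i x hx
    by_contra h
    exact hx (hftsupp i (support_fderiv_subset ℝ (by simpa using h)))
  -- differentiability of f i everywhere
  have hdifff : ∀ i, Differentiable ℝ (f i) := by
    intro i x
    by_cases hx : x ∈ B
    · exact (aux_deriv (hupos x hx).ne' (hux x hx) (hwx i x hx) (hηx x)).1
    · have hx' : x ∉ tsupport η := fun h => hx (hηsupp h)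
      have hev : f i =ᶠ[nhds x] fun _ => (0:ℝ) := by
        filter_upwards [(isClosed_tsupport η).isOpen_compl.mem_nhds hx'] with y hy
          using hfsupp i y hy
      exact (differentiableAt_const (0:ℝ)).congr_of_eventuallyEq hev
  -- integrability of divergence terms
  have iD : ∀ i, Integrable (fun x => fderiv ℝ (f i) x (e i)) := by
    intro i
    apply glue _ ?_ ?_
    · exact (((hfC1 i).continuousOn_fderiv_of_isOpen hB le_rfl).clm_apply continuousOn_const)
    · intro x hx; rw [hdf0 i x hx]; simp
  -- integration by parts: each divergence term integrates to zero
  have hIBP : ∀ i, (∫ x, fderiv ℝ (f i) x (e i)) = 0 := by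
    intro i
    have h := integral_mul_fderiv_eq_neg_fderiv_mul_of_integrable
      (μ := (volume : Measure (EuclideanSpace ℝ (Fin n)))) (f := f i) (g := fun _ => (1:ℝ)) (v := e i)
      (by simpa using iD i)
      (by simp [fderiv_const])
      (by simpa using glue (f i) (hfC1 i).continuousOn (hfsupp i))
      (fun x _ => hdifff i x) (fun x _ => differentiableAt_const (1:ℝ))
    simp [fderiv_const] at h
    linarith [h]
  -- divergence identity
  have hdiv : ∀ x, (∑ i, fderiv ℝ (f i) x (e i)) = C x - X x + T x := by
    intro x
    by_cases hx : x ∈ B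
    · have hterm : ∀ i : Fin n, fderiv ℝ (f i) x (e i) =
          (2 * η x * (u x)⁻¹) * (fderiv ℝ η x (e i) * fderiv ℝ u x (e i))
          - (η x ^ 2 * (u x)⁻¹ ^ 2) * fderiv ℝ u x (e i) ^ 2
          + (η x ^ 2 * (u x)⁻¹) * fderiv ℝ (fun y => fderiv ℝ u y (e i)) x (e i) := by
        intro i
        rw [(aux_deriv (hupos x hx).ne' (hux x hx) (hwx i x hx) (hηx x)).2]
        ring
      rw [Finset.sum_congr rfl fun i _ => hterm i]
      simp only [Finset.sum_add_distrib, Finset.sum_sub_distrib, ← Finset.mul_sum,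
        hCdef, hXdef, hTdef]
      ring
    · have hx' : x ∉ tsupport η := fun h => hx (hηsupp h)
      have h0 : ∀ i : Fin n, fderiv ℝ (f i) x (e i) = 0 := by
        intro i; rw [hdf0 i x hx']; simp
      rw [Finset.sum_congr rfl fun i _ => h0 i]
      simp [hCdef, hXdef, hTdef, hηt0 x hx']
  -- the divergence theorem: ∫ (C - X + T) = 0
  have hdivint : (∫ x, (C x - X x + T x)) = 0 := by
    have h1 : (∫ x, ∑ i, fderiv ℝ (f i) x (e i)) = 0 := by
      rw [integral_finset_sum _ fun i _ => iD i]
      exact Finset.sum_eq_zero fun i _ => hIBP i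
    rw [← h1]
    exact integral_congr_ae (Filter.Eventually.of_forall fun x => (hdiv x).symm)
  have hsplit : (∫ x, X x) = (∫ x, C x) + ∫ x, T x := by
    have h1 : (∫ x, (C x - X x + T x)) = (∫ x, (C x - X x)) + ∫ x, T x :=
      integral_add (iC.sub iX) iT
    have h2 : (∫ x, (C x - X x)) = (∫ x, C x) - ∫ x, X x := integral_sub iC iX
    rw [h1, h2] at hdivint
    linarith
  -- T ≤ 0 pointwise
  have hTle : ∀ x, T x ≤ 0 := by
    intro x
    by_cases hx : x ∈ B
    · have h1 : (0:ℝ) < (u x)⁻¹ := inv_pos.2 (hupos x hx)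
      have h2 := hsuper x hx
      have h3 : (0:ℝ) ≤ η x ^ 2 := sq_nonneg _
      simp only [hTdef]
      have : (u x)⁻¹ * (∑ i, fderiv ℝ (fun y => fderiv ℝ u y (e i)) x (e i)) ≤ 0 := by
        apply mul_nonpos_of_nonneg_of_nonpos h1.le h2.le
      exact mul_nonpos_of_nonneg_of_nonpos h3 this
    · simp [hTdef, hηB0 x hx]
  -- pointwise bound on C
  have hCle : ∀ x, C x ≤ (1/2) * X x + 2 * Y x := by
    intro x
    by_cases hx : x ∈ B
    · have hcs : (∑ i, fderiv ℝ η x (e i) * fderiv ℝ u x (e i))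
          ≤ ‖fderiv ℝ η x‖ * ‖fderiv ℝ u x‖ := cs_clm _ _
      have hXx : X x = (η x * (u x)⁻¹ * ‖fderiv ℝ u x‖) ^ 2 := by
        simp only [hXdef]
        rw [← norm_clm_sq (fderiv ℝ u x)]
        ring
      have hYx : Y x = ‖fderiv ℝ η x‖ ^ 2 := rfl
      have hfac : (0:ℝ) ≤ 2 * η x * (u x)⁻¹ := by
        have := hηpos x
        have := (hupos x hx).le
        positivity
      have step1 : C x ≤ 2 * η x * (u x)⁻¹ * (‖fderiv ℝ η x‖ * ‖fderiv ℝ u x‖) := by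
        simp only [hCdef]
        exact mul_le_mul_of_nonneg_left hcs hfac
      have step2 : 2 * η x * (u x)⁻¹ * (‖fderiv ℝ η x‖ * ‖fderiv ℝ u x‖)
          ≤ (1/2) * X x + 2 * Y x := by
        rw [hXx, hYx]
        nlinarith [sq_nonneg (η x * (u x)⁻¹ * ‖fderiv ℝ u x‖ - 2 * ‖fderiv ℝ η x‖),
          hηpos x, inv_pos.2 (hupos x hx), norm_nonneg (fderiv ℝ u x),
          norm_nonneg (fderiv ℝ η x), mul_nonneg (hηpos x) (inv_pos.2 (hupos x hx)).le]
      linarith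
    · have h1 : C x = 0 := by simp [hCdef, hηB0 x hx]
      have h2 : (0:ℝ) ≤ X x := by
        simp only [hXdef]
        positivity
      have h3 : (0:ℝ) ≤ Y x := sq_nonneg _
      linarith
  -- integral estimates
  have hTint : (∫ x, T x) ≤ 0 := integral_nonpos hTle
  have hCint : (∫ x, C x) ≤ (1/2) * (∫ x, X x) + 2 * ∫ x, Y x := by
    have h : (∫ x, C x) ≤ ∫ x, ((1:ℝ)/2 * X x + 2 * Y x) :=
      integral_mono iC ((iX.const_mul ((1:ℝ)/2)).add (iY.const_mul 2)) hCle
    have h2 : (∫ x, ((1:ℝ)/2 * X x + 2 * Y x))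
        = (1/2) * (∫ x, X x) + 2 * ∫ x, Y x := by
      have h3 : (∫ x, ((1:ℝ)/2 * X x + 2 * Y x))
          = (∫ x, (1:ℝ)/2 * X x) + ∫ x, 2 * Y x :=
        integral_add (iX.const_mul ((1:ℝ)/2)) (iY.const_mul 2)
      rw [h3, integral_const_mul, integral_const_mul]
    linarith
  have hmain : (∫ x, X x) ≤ 4 * ∫ x, Y x := by linarith
  -- convert the goal
  have hgoalL : (∫ x in B, ‖fderiv ℝ (fun y => Real.log (u y)) x‖ ^ 2 * η x ^ 2)
      = ∫ x, X x := by
    have heq : ∀ x, ‖fderiv ℝ (fun y => Real.log (u y)) x‖ ^ 2 * η x ^ 2 = X x := by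
      intro x
      by_cases hx : x ∈ B
      · have hlog : fderiv ℝ (fun y => Real.log (u y)) x = (u x)⁻¹ • fderiv ℝ u x := by
          have h := (Real.hasDerivAt_log (hupos x hx).ne').comp_hasFDerivAt x (hux x hx)
          exact h.fderiv
        rw [hlog]
        simp only [hXdef]
        rw [norm_smul, Real.norm_eq_abs, abs_of_pos (inv_pos.2 (hupos x hx)),
          ← norm_clm_sq (fderiv ℝ u x)]
        ring
      · simp [hXdef, hηB0 x hx]
    rw [show (fun x => ‖fderiv ℝ (fun y => Real.log (u y)) x‖ ^ 2 * η x ^ 2) = X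
      from funext heq]
    apply setIntegral_eq_integral_of_forall_compl_eq_zero
    intro x hx
    simp [hXdef, hηB0 x hx]
  have hgoalR : (∫ x in B, ‖fderiv ℝ η x‖ ^ 2) = ∫ x, Y x := by
    apply setIntegral_eq_integral_of_forall_compl_eq_zero
    intro x hx
    simp [hYdef, hdηB0 x hx]
  rw [hgoalL, hgoalR]
  exact hmain
end

section
/- Let A = A₀ − [∇²w − dw⊗dw + ½|∇w|² g₀] be the conformally transformed Schouten tensor with g₀ the Euclidean metric on ℝ⁴ and A₀ = 0. Then 2σ₂(g₀⁻¹A) = −∂_a(M^a_b ∂^b w) where M^a_b = T₁(g₀⁻¹A)^a_b + ½|∇w|² δ^a_b, for every w ∈ C³. -/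
open Matrix

/-- Partial derivative in direction `i` for functions on ℝ⁴. -/
noncomputable def pd (i : Fin 4) (f : (Fin 4 → ℝ) → ℝ) (x : Fin 4 → ℝ) : ℝ :=
  fderiv ℝ f x (Pi.single i 1)

/-- The conformal Schouten tensor A = −∇²w + dw⊗dw − ½|∇w|²δ (flat background). -/
noncomputable def schouten (w : (Fin 4 → ℝ) → ℝ) (x : Fin 4 → ℝ) :
    Matrix (Fin 4) (Fin 4) ℝ := fun a b =>
  -(pd a (pd b w) x) + pd a w x * pd b w x
    - (if a = b then (1 / 2) * ∑ c, (pd c w x) ^ 2 else 0)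

/-- σ₂ of a 4×4 matrix. -/
noncomputable def sigma2 (B : Matrix (Fin 4) (Fin 4) ℝ) : ℝ :=
  ((B.trace) ^ 2 - (B * B).trace) / 2

/-- The coefficient matrix M = T₁(A) + ½|∇w|²·Id. -/
noncomputable def Mcoef (w : (Fin 4 → ℝ) → ℝ) (x : Fin 4 → ℝ) :
    Matrix (Fin 4) (Fin 4) ℝ :=
  ((schouten w x).trace • (1 : Matrix (Fin 4) (Fin 4) ℝ) - schouten w x) +
    ((1 / 2) * ∑ c, (pd c w x) ^ 2) • (1 : Matrix (Fin 4) (Fin 4) ℝ)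

section pdLemmas
variable {f g : (Fin 4 → ℝ) → ℝ} {x : Fin 4 → ℝ} {i : Fin 4}

lemma pd_congr (h : f =ᶠ[nhds x] g) : pd i f x = pd i g x := by
  simp [pd, h.fderiv_eq]

lemma ContDiffAt.pd_cdiff {n m : WithTop ℕ∞} (hf : ContDiffAt ℝ n f x) (h : m + 1 ≤ n) :
    ContDiffAt ℝ m (pd i f) x :=
  (hf.fderiv_right h).clm_apply contDiffAt_const

lemma pd_add (hf : DifferentiableAt ℝ f x) (hg : DifferentiableAt ℝ g x) :
    pd i (fun y => f y + g y) x = pd i f x + pd i g x := by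
  simp [pd, fderiv_fun_add hf hg]

lemma pd_sub (hf : DifferentiableAt ℝ f x) (hg : DifferentiableAt ℝ g x) :
    pd i (fun y => f y - g y) x = pd i f x - pd i g x := by
  simp [pd, fderiv_fun_sub hf hg]

lemma pd_neg : pd i (fun y => -f y) x = -pd i f x := by
  simp [pd, fderiv_neg]

lemma pd_mul (hf : DifferentiableAt ℝ f x) (hg : DifferentiableAt ℝ g x) :
    pd i (fun y => f y * g y) x = pd i f x * g x + f x * pd i g x := by
  simp [pd, fderiv_fun_mul hf hg]; ring

lemma pd_sum {s : Finset (Fin 4)} {F : Fin 4 → (Fin 4 → ℝ) → ℝ}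
    (h : ∀ j ∈ s, DifferentiableAt ℝ (F j) x) :
    pd i (fun y => ∑ j ∈ s, F j y) x = ∑ j ∈ s, pd i (F j) x := by
  simp [pd, fderiv_fun_sum h]

lemma pd_comm {n : WithTop ℕ∞} (hf : ContDiffAt ℝ n f x) (h : 2 ≤ n) (a b : Fin 4) :
    pd a (pd b f) x = pd b (pd a f) x := by
  have hd : DifferentiableAt ℝ (fderiv ℝ f) x :=
    (hf.fderiv_right (m := 1) h).differentiableAt (by norm_num)
  have key : ∀ u v : Fin 4 → ℝ, fderiv ℝ (fun y => fderiv ℝ f y v) x u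
      = fderiv ℝ (fderiv ℝ f) x u v := by
    intro u v
    rw [fderiv_clm_apply hd (differentiableAt_const v)]
    simp
  have hsym := hf.isSymmSndFDerivAt (by simpa [minSmoothness_of_isRCLikeNormedField] using h)
  show fderiv ℝ (fun y => fderiv ℝ f y (Pi.single b 1)) x (Pi.single a 1)
      = fderiv ℝ (fun y => fderiv ℝ f y (Pi.single a 1)) x (Pi.single b 1)
  rw [key, key, hsym]

end pdLemmas

set_option maxHeartbeats 2000000 in
/-- Divergence structure: 2σ₂(g₀⁻¹A) = −∂_a(M^a_b ∂^b w) for the flat background. -/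
theorem sigma2_divergence_structure (U : Set (Fin 4 → ℝ)) (hU : IsOpen U)
    (w : (Fin 4 → ℝ) → ℝ) (hw : ContDiffOn ℝ 3 w U) (x : Fin 4 → ℝ) (hx : x ∈ U) :
    2 * sigma2 (schouten w x) =
      -∑ a, pd a (fun y => ∑ b, Mcoef w y a b * pd b w y) x := by
  have hwx : ∀ y ∈ U, ContDiffAt ℝ 3 w y := fun y hy => hw.contDiffAt (hU.mem_nhds hy)
  have hw3 := hwx x hx
  have h2 : ∀ (y : Fin 4 → ℝ), y ∈ U → ∀ b, ContDiffAt ℝ 2 (pd b w) y :=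
    fun y hy b => (hwx y hy).pd_cdiff (n := 3) (by norm_num)
  have h1 : ∀ a b, ContDiffAt ℝ 1 (pd a (pd b w)) x :=
    fun a b => (h2 x hx b).pd_cdiff (n := 2) (by norm_num)
  have dP : ∀ b, DifferentiableAt ℝ (pd b w) x :=
    fun b => (h2 x hx b).differentiableAt (by norm_num)
  have dH : ∀ a b, DifferentiableAt ℝ (pd a (pd b w)) x :=
    fun a b => (h1 a b).differentiableAt (by norm_num)
  -- second derivative symmetry at x
  have hH : ∀ a b, pd a (pd b w) x = pd b (pd a w) x :=
    fun a b => pd_comm hw3 (by norm_num) a b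
  -- third derivative symmetry
  have hT : ∀ a c, pd a (pd c (pd c w)) x = pd c (pd c (pd a w)) x := by
    intro a c
    have step1 : pd a (pd c (pd c w)) x = pd c (pd a (pd c w)) x :=
      pd_comm (h2 x hx c) le_rfl a c
    have step2 : pd a (pd c w) =ᶠ[nhds x] pd c (pd a w) := by
      filter_upwards [hU.mem_nhds hx] with y hy
      exact pd_comm (hwx y hy) (by norm_num) a c
    rw [step1, pd_congr step2]
  -- rewrite the inner vector field
  have hM : ∀ (y : Fin 4 → ℝ) (a b : Fin 4), Mcoef w y a b
      = (if a = b then -(∑ c, pd c (pd c w) y) else 0)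
        + pd a (pd b w) y - pd a w y * pd b w y := by
    intro y a b
    have trS : (schouten w y).trace
        = -(∑ c, pd c (pd c w) y) - ∑ c, pd c w y * pd c w y := by
      simp only [Matrix.trace, Matrix.diag, schouten, eq_self_iff_true, if_true]
      rw [Fin.sum_univ_four]
      simp only [Fin.sum_univ_four]
      ring
    simp only [Mcoef, Matrix.add_apply, Matrix.sub_apply, Matrix.smul_apply,
      Matrix.one_apply, smul_eq_mul, trS, schouten]
    simp only [Fin.sum_univ_four]
    by_cases h : a = b <;> simp [h] <;> ring
  have hfun : ∀ a : Fin 4, (fun y => ∑ b, Mcoef w y a b * pd b w y)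
      = (fun y => (-(∑ c, pd c (pd c w) y)) * pd a w y
          + ∑ b, pd a (pd b w) y * pd b w y
          - pd a w y * ∑ b, pd b w y * pd b w y) := by
    intro a; funext y
    simp only [hM]
    rw [Fin.sum_univ_four, Fin.sum_univ_four (f := fun b => pd a (pd b w) y * pd b w y),
      Fin.sum_univ_four (f := fun b => pd b w y * pd b w y)]
    fin_cases a <;> simp <;> ring
  -- compute each divergence term
  have hdiv : ∀ a : Fin 4, pd a (fun y => ∑ b, Mcoef w y a b * pd b w y) x
      = (-(∑ c, pd a (pd c (pd c w)) x)) * pd a w x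
          + (-(∑ c, pd c (pd c w) x)) * pd a (pd a w) x
        + ∑ b, (pd a (pd a (pd b w)) x * pd b w x
            + pd a (pd b w) x * pd a (pd b w) x)
        - (pd a (pd a w) x * (∑ b, pd b w x * pd b w x)
          + pd a w x * ∑ b, (pd a (pd b w) x * pd b w x
              + pd b w x * pd a (pd b w) x)) := by
    intro a
    rw [hfun a]
    have dS1 : DifferentiableAt ℝ (fun y => ∑ c, pd c (pd c w) y) x :=
      DifferentiableAt.fun_sum (fun c _ => dH c c)
    have dS2 : DifferentiableAt ℝ (fun y => ∑ b, pd b w y * pd b w y) x :=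
      DifferentiableAt.fun_sum (fun b _ => (dP b).mul (dP b))
    have dt1 : DifferentiableAt ℝ (fun y => (-(∑ c, pd c (pd c w) y)) * pd a w y) x :=
      dS1.neg.mul (dP a)
    have dt2 : DifferentiableAt ℝ (fun y => ∑ b, pd a (pd b w) y * pd b w y) x :=
      DifferentiableAt.fun_sum (fun b _ => (dH a b).mul (dP b))
    have dt3 : DifferentiableAt ℝ (fun y => pd a w y * ∑ b, pd b w y * pd b w y) x :=
      (dP a).mul dS2
    rw [pd_sub (dt1.fun_add dt2) dt3, pd_add dt1 dt2,
      pd_mul dS1.fun_neg (dP a), pd_mul (dP a) dS2, pd_neg,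
      pd_sum (fun c _ => dH c c),
      pd_sum (fun b _ => (dH a b).fun_mul (dP b)),
      pd_sum (fun b _ => (dP b).fun_mul (dP b))]
    have e1 : ∀ b : Fin 4, pd a (fun y => pd a (pd b w) y * pd b w y) x
        = pd a (pd a (pd b w)) x * pd b w x + pd a (pd b w) x * pd a (pd b w) x :=
      fun b => pd_mul (dH a b) (dP b)
    have e2 : ∀ b : Fin 4, pd a (fun y => pd b w y * pd b w y) x
        = pd a (pd b w) x * pd b w x + pd b w x * pd a (pd b w) x :=
      fun b => pd_mul (dP b) (dP b)
    simp only [e1, e2]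
  simp only [hdiv]
  simp only [sigma2, schouten, Matrix.trace, Matrix.diag, Matrix.mul_apply]
  simp only [Fin.sum_univ_four]
  simp only [Fin.reduceEq, eq_self_iff_true, if_true, if_false]
  rw [hT 0 1, hT 0 2, hT 0 3, hT 1 0, hT 1 2, hT 1 3,
    hT 2 0, hT 2 1, hT 2 3, hT 3 0, hT 3 1, hT 3 2]
  simp only [hH 1 0, hH 2 0, hH 3 0, hH 2 1, hH 3 1, hH 3 2]
  ring
end
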